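/- Let a, b, c be integers with a > b ≥ 0 and c ≥ 0. Then in ℤ[v, v⁻¹] one has ∑_{k=0}^{c} (−1)^{c−k} v^{−k(b+c)} [a−b−1+c−k choose a−b−1] [a+c choose k] = v^{−c(a+c)} [b+c choose c]. -/

import Mathlib

open LaurentPolynomial

/-- The Gaussian polynomial `⟦N choose t⟧`, an element of `ℤ[v, v⁻¹]` (here `v = T 1`),
defined via the `q`-Pascal recursion (with `q = v²`):
`⟦N choose 0⟧ = 1`, `⟦0 choose t+1⟧ = 0`,
`⟦N+1 choose t+1⟧ = ⟦N choose t⟧ + v^{2(t+1)} ⟦N choose t+1⟧`.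
It equals the product `∏_{i=1}^{t} (v^{2(N−i+1)} − 1)/(v^{2i} − 1)` when `t ≤ N`,
and vanishes when `t > N`. -/
noncomputable def gaussPoly : ℕ → ℕ → LaurentPolynomial ℤ
  | _, 0 => 1
  | 0, _ + 1 => 0
  | N + 1, t + 1 => gaussPoly N t + T (2 * ((t : ℤ) + 1)) * gaussPoly N (t + 1)

/-- The symmetric Gaussian polynomial `[N choose t] = v^{−t(N−t)} ⟦N choose t⟧`. -/
noncomputable def sgauss (N t : ℕ) : LaurentPolynomial ℤ :=
  T (-((t : ℤ) * ((N : ℤ) - (t : ℤ)))) * gaussPoly N t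

/-- The bar involution on `ℤ[v, v⁻¹]`: the ring automorphism fixing `ℤ` and sending
`v ↦ v⁻¹` (substitution `T ↦ T⁻¹`). -/
noncomputable def bar (p : LaurentPolynomial ℤ) : LaurentPolynomial ℤ :=
  LaurentPolynomial.invert p

/-- `p ∈ v⁻¹ℤ[v⁻¹]`: every monomial `v^m` occurring in `p` with nonzero coefficient has
`m ≤ −1`. -/
def InNegPart (p : LaurentPolynomial ℤ) : Prop :=
  ∀ m : ℤ, p.coeff m ≠ 0 → m < 0

/-!
Write `q = v²` and `a = b + d + 1`. Clearing the powers of `v` and reversing the order of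
summation turns the identity into the `q`-analogue
`∑_j (-1)^j q^{j(m-c) + j(j+1)/2} ⟦D+j-1 choose j⟧ ⟦m+D choose c-j⟧ = ⟦m choose c⟧`,
with `D = d + 1` and `m = b + c`, of `(1 + x)^{-D} (1 + x)^{m+D} = (1 + x)^m`.
Splitting `⟦D+j choose j⟧` by the `q`-Pascal rule shows that the left side satisfies, in
`(D, c)`, the recursion the right side satisfies by the other `q`-Pascal rule; at `D = 0` only
`j = 0` survives.
-/

open Finset

lemma gaussPoly_zero_right (N : ℕ) : gaussPoly N 0 = 1 := by cases N <;> rfl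

lemma gaussPoly_succ_succ (N t : ℕ) :
    gaussPoly (N + 1) (t + 1) = gaussPoly N t + T (2 * ((t : ℤ) + 1)) * gaussPoly N (t + 1) :=
  rfl

lemma gaussPoly_eq_zero_of_lt : ∀ {N t : ℕ}, N < t → gaussPoly N t = 0
  | 0, _ + 1, _ => rfl
  | N + 1, t + 1, h => by
    rw [gaussPoly_succ_succ, gaussPoly_eq_zero_of_lt (by omega : N < t),
      gaussPoly_eq_zero_of_lt (by omega : N < t + 1), mul_zero, add_zero]

lemma gaussPoly_self : ∀ N : ℕ, gaussPoly N N = 1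
  | 0 => rfl
  | N + 1 => by
    rw [gaussPoly_succ_succ, gaussPoly_self N, gaussPoly_eq_zero_of_lt N.lt_succ_self, mul_zero,
      add_zero]

lemma gaussPoly_succ_succ' : ∀ N t : ℕ,
    gaussPoly (N + 1) (t + 1) = T (2 * ((N : ℤ) - t)) * gaussPoly N t + gaussPoly N (t + 1)
  | 0, t => by
    rw [gaussPoly_succ_succ, gaussPoly_eq_zero_of_lt t.succ_pos]
    cases t <;> simp [gaussPoly]
  | N + 1, 0 => by
    have h := gaussPoly_succ_succ' N 0
    have p := gaussPoly_succ_succ N 0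
    have e : (T 2 * T (2 * (N : ℤ)) : LaurentPolynomial ℤ) = T (2 * ((N : ℤ) + 1)) := by
      rw [← T_add]; ring_nf
    rw [gaussPoly_succ_succ (N + 1)]
    simp only [gaussPoly_zero_right] at *
    push_cast at *
    linear_combination (norm := ring_nf) T 2 * h - p + e
  | N + 1, t + 1 => by
    have h₁ := gaussPoly_succ_succ' N t
    have h₂ := gaussPoly_succ_succ' N (t + 1)
    have p₁ := gaussPoly_succ_succ N t
    have p₂ := gaussPoly_succ_succ N (t + 1)
    have e : (T (2 * ((t : ℤ) + 2)) * T (2 * ((N : ℤ) - (t + 1))) : LaurentPolynomial ℤ) =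
        T (2 * ((N : ℤ) - t)) * T (2 * ((t : ℤ) + 1)) := by
      rw [← T_add, ← T_add]; ring_nf
    rw [gaussPoly_succ_succ (N + 1)]
    push_cast at *
    linear_combination (norm := ring_nf)
      h₁ + T (2 * ((t : ℤ) + 2)) * h₂ - T (2 * ((N : ℤ) - t)) * p₁ - p₂ +
        gaussPoly N (t + 1) * e

lemma gaussPoly_symm_add : ∀ m n : ℕ, gaussPoly (m + n) m = gaussPoly (m + n) n
  | 0, n => by rw [zero_add, gaussPoly_zero_right, gaussPoly_self]
  | m + 1, 0 => by rw [add_zero, gaussPoly_zero_right, gaussPoly_self]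
  | m + 1, n + 1 => by
    have h₁ : gaussPoly (m + n + 1) m = gaussPoly (m + n + 1) (n + 1) :=
      gaussPoly_symm_add m (n + 1)
    have h₂ : gaussPoly (m + n + 1) (m + 1) = gaussPoly (m + n + 1) n := by
      simpa only [Nat.add_right_comm] using gaussPoly_symm_add (m + 1) n
    rw [show m + 1 + (n + 1) = m + n + 1 + 1 by ring, gaussPoly_succ_succ (m + n + 1) m,
      gaussPoly_succ_succ' (m + n + 1) n, h₁, h₂]
    push_cast
    ring_nf

/-- `D + j - 1` truncates to `0` at `D = j = 0`, giving the right value `⟦0 choose 0⟧ = 1`. -/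
noncomputable def negVandermondeTerm (D m c j : ℕ) : LaurentPolynomial ℤ :=
  (-1) ^ j * T (2 * (j : ℤ) * ((m : ℤ) - c) + (j : ℤ) * (j + 1)) *
    gaussPoly (D + j - 1) j * gaussPoly (m + D) (c - j)

noncomputable def negVandermondeSum (D m c : ℕ) : LaurentPolynomial ℤ :=
  ∑ j ∈ range (c + 1), negVandermondeTerm D m c j

lemma negVandermondeTerm_zero (D m c : ℕ) :
    negVandermondeTerm D m c 0 = gaussPoly (m + D) c := by
  simp [negVandermondeTerm, gaussPoly_zero_right]

lemma negVandermondeTerm_succ (D m c i : ℕ) :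
    negVandermondeTerm (D + 1) m (c + 1) (i + 1) =
      negVandermondeTerm D (m + 1) (c + 1) (i + 1) -
        T (2 * ((m : ℤ) - c)) * negVandermondeTerm (D + 1) m c i := by
  have e₁ : (T (2 * ((i : ℤ) + 1) * ((m : ℤ) - (c + 1)) + ((i : ℤ) + 1) * (i + 1 + 1)) *
      T (2 * ((i : ℤ) + 1)) : LaurentPolynomial ℤ) =
      T (2 * ((i : ℤ) + 1) * ((m : ℤ) + 1 - (c + 1)) + ((i : ℤ) + 1) * (i + 1 + 1)) := by
    rw [← T_add]; ring_nf
  have e₂ : (T (2 * ((i : ℤ) + 1) * ((m : ℤ) - (c + 1)) + ((i : ℤ) + 1) * (i + 1 + 1)) :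
      LaurentPolynomial ℤ) =
      T (2 * ((m : ℤ) - c)) * T (2 * (i : ℤ) * ((m : ℤ) - c) + (i : ℤ) * (i + 1)) := by
    rw [← T_add]; ring_nf
  unfold negVandermondeTerm
  rw [show D + 1 + (i + 1) - 1 = D + i + 1 by omega, show D + (i + 1) - 1 = D + i by omega,
    show D + 1 + i - 1 = D + i by omega, show c + 1 - (i + 1) = c - i by omega,
    show m + 1 + D = m + (D + 1) by ring, gaussPoly_succ_succ]
  push_cast
  linear_combination (norm := ring_nf)
    (-(-1) ^ i * gaussPoly (D + i) (i + 1) * gaussPoly (m + (D + 1)) (c - i)) * e₁ +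
      (-(-1) ^ i * gaussPoly (D + i) i * gaussPoly (m + (D + 1)) (c - i)) * e₂

lemma negVandermondeSum_succ (D m c : ℕ) :
    negVandermondeSum (D + 1) m (c + 1) =
      negVandermondeSum D (m + 1) (c + 1) -
        T (2 * ((m : ℤ) - c)) * negVandermondeSum (D + 1) m c := by
  rw [negVandermondeSum, negVandermondeSum, negVandermondeSum,
    sum_range_succ' (negVandermondeTerm (D + 1) m (c + 1)),
    sum_range_succ' (negVandermondeTerm D (m + 1) (c + 1))]
  simp only [negVandermondeTerm_succ, sum_sub_distrib, mul_sum, negVandermondeTerm_zero,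
    Nat.add_right_comm m 1 D]
  abel

theorem negVandermondeSum_eq (D m c : ℕ) : negVandermondeSum D m c = gaussPoly m c := by
  induction D generalizing m c with
  | zero =>
    rw [negVandermondeSum, sum_eq_single 0, negVandermondeTerm_zero, add_zero]
    · intro j _ hj
      rw [negVandermondeTerm, gaussPoly_eq_zero_of_lt (by omega : 0 + j - 1 < j), mul_zero,
        zero_mul]
    · simp
  | succ D ih =>
    induction c with
    | zero => simp [negVandermondeSum, negVandermondeTerm_zero, gaussPoly_zero_right]
    | succ c ihc => rw [negVandermondeSum_succ, ih, ihc, gaussPoly_succ_succ', add_sub_cancel_left]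

lemma alternating_sgauss_sum_eq_negVandermondeSum (b c d : ℕ) :
    ∑ k ∈ range (c + 1),
        ((-1) ^ (c - k) : LaurentPolynomial ℤ) * T (-((k : ℤ) * ((b : ℤ) + (c : ℤ)))) *
          sgauss (d + (c - k)) d * sgauss (b + d + 1 + c) k =
      T (-((c : ℤ) * (2 * b + d + c + 1))) * negVandermondeSum (d + 1) (b + c) c := by
  rw [← sum_range_reflect, negVandermondeSum, mul_sum]
  refine sum_congr rfl fun j hj => ?_
  obtain ⟨i, rfl⟩ : ∃ i, c = j + i := ⟨c - j, by have := mem_range.mp hj; omega⟩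
  have e : (T (-((i : ℤ) * (b + (j + i)))) * T (-((d : ℤ) * (d + j - d))) *
      T (-((i : ℤ) * (b + d + 1 + (j + i) - i))) : LaurentPolynomial ℤ) =
      T (-(((j : ℤ) + i) * (2 * b + d + (j + i) + 1))) *
        T (2 * (j : ℤ) * (b + (j + i) - (j + i)) + (j : ℤ) * (j + 1)) := by
    rw [← T_add, ← T_add, ← T_add]; ring_nf
  rw [negVandermondeTerm, show j + i + 1 - 1 - j = i by omega, show j + i - i = j by omega,
    show j + i - j = i by omega, show d + 1 + j - 1 = d + j by omega,
    show b + (j + i) + (d + 1) = b + d + 1 + (j + i) by ring, sgauss, sgauss, gaussPoly_symm_add]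
  push_cast
  linear_combination (norm := ring_nf)
    ((-1) ^ j * gaussPoly (d + j) j * gaussPoly (b + d + 1 + (j + i)) i) * e

/-- For integers `a > b ≥ 0` and `c ≥ 0`, in `ℤ[v, v⁻¹]`:
`∑_{k=0}^{c} (−1)^{c−k} v^{−k(b+c)} [a−b−1+c−k choose a−b−1] [a+c choose k]
  = v^{−c(a+c)} [b+c choose c]`. -/
theorem gauss_alternating_sum_identity' (a b c : ℕ) (hba : b < a) :
    ∑ k ∈ Finset.range (c + 1),
        ((-1) ^ (c - k) : LaurentPolynomial ℤ) * T (-((k : ℤ) * ((b : ℤ) + (c : ℤ)))) *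
          sgauss (a - b - 1 + (c - k)) (a - b - 1) * sgauss (a + c) k
      = T (-((c : ℤ) * ((a : ℤ) + (c : ℤ)))) * sgauss (b + c) c := by
  obtain ⟨d, rfl⟩ : ∃ d, a = b + d + 1 := ⟨a - b - 1, by omega⟩
  rw [show b + d + 1 - b - 1 = d by omega, alternating_sgauss_sum_eq_negVandermondeSum,
    negVandermondeSum_eq, sgauss, ← mul_assoc, ← T_add]
  push_cast
  ring_nf
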